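/- For any n-dimensional hypersurface in R^{n+1}, the improved Kato inequality ((n+3)/(n+1)) |∇√S|² ≤ Σ_{i,j,k} h_{ijk}² + (2n/(n+1)) |∇H|² holds pointwise where S ≠ 0. -/
import Mathlib

open Finset

/-- Key per-index algebraic inequality: `u k ^ 2 ≤ n * ∑_{i≠k} u i ^ 2 + n * (∑ i, u i)^2`. -/
lemma ssy_aux_key {n : ℕ} (k : Fin n) (u : Fin n → ℝ) :
    (u k) ^ 2 ≤ (n : ℝ) * (∑ i ∈ Finset.univ.erase k, (u i) ^ 2)
      + (n : ℝ) * (∑ i, u i) ^ 2 := by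
  have hq : (0:ℝ) ≤ ∑ i ∈ Finset.univ.erase k, (u i) ^ 2 :=
    Finset.sum_nonneg fun i _ => sq_nonneg _
  have hsplit : (∑ i, u i) = u k + ∑ i ∈ Finset.univ.erase k, u i :=
    (Finset.add_sum_erase _ _ (Finset.mem_univ k)).symm
  have hcard : ((Finset.univ.erase k).card : ℝ) = (n : ℝ) - 1 := by
    rw [Finset.card_erase_of_mem (Finset.mem_univ k)]
    simp only [Finset.card_univ, Fintype.card_fin]
    have : 1 ≤ n := k.pos
    push_cast [Nat.cast_sub this]
    ring
  have hcs : (∑ i ∈ Finset.univ.erase k, u i) ^ 2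
      ≤ ((n:ℝ) - 1) * ∑ i ∈ Finset.univ.erase k, (u i) ^ 2 := by
    have := sq_sum_le_card_mul_sum_sq (s := Finset.univ.erase k) (f := u)
    calc (∑ i ∈ Finset.univ.erase k, u i) ^ 2
        ≤ ((Finset.univ.erase k).card : ℝ) * ∑ i ∈ Finset.univ.erase k, (u i) ^ 2 := by
          exact_mod_cast this
      _ = _ := by rw [hcard]
  set q : ℝ := ∑ i ∈ Finset.univ.erase k, (u i) ^ 2
  set w : ℝ := ∑ i ∈ Finset.univ.erase k, u i
  set c : ℝ := u k
  rw [hsplit]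
  rcases Nat.lt_or_ge n 2 with hn | hn
  · -- n = 1
    have hn1 : n = 1 := by have := k.pos; omega
    have hk : Finset.univ.erase k = (∅ : Finset (Fin n)) := by
      ext i
      simp only [Finset.mem_erase, Finset.mem_univ, and_true, Finset.notMem_empty,
        iff_false, ne_eq, not_not]
      exact Fin.ext (by omega)
    have hq0 : q = 0 := by simp only [q, hk, Finset.sum_empty]
    have hw0 : w = 0 := by simp only [w, hk, Finset.sum_empty]
    rw [hq0, hw0, hn1]
    norm_num
  · have hm : (2:ℝ) ≤ (n:ℝ) := by exact_mod_cast hn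
    nlinarith [sq_nonneg ((n:ℝ) * w + ((n:ℝ) - 1) * c), hcs, hq, sq_nonneg (c + w),
      mul_nonneg (sub_nonneg.2 (by linarith : (1:ℝ) ≤ (n:ℝ))) hq]

/-- For any `n`-dimensional hypersurface in `ℝ^{n+1}`, the improved
(Schoen–Simon–Yau type) Kato inequality
`((n+3)/(n+1)) |∇√S|² ≤ Σ_{i,j,k} h_{ijk}² + (2n/(n+1)) |∇H|²` holds pointwise where
`S ≠ 0`.  Here `h` is the second fundamental form in a principal frame, `T = ∇h` is totally
symmetric, `∇_k √S = (Σ_{i,j} h_{ij} h_{ijk}) / √S` and `H_{,k} = Σ_i h_{iik}`. -/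
theorem ssy_kato_inequality (n : ℕ) (h : Fin n → Fin n → ℝ) (T : Fin n → Fin n → Fin n → ℝ)
    (hsymm : ∀ i j, h i j = h j i)
    (hdiag : ∀ i j, i ≠ j → h i j = 0)
    (hTsymm : ∀ i j k, T i j k = T j i k ∧ T i j k = T i k j)
    (hS : (∑ i, ∑ j, (h i j) ^ 2) ≠ 0) :
    ((n : ℝ) + 3) / ((n : ℝ) + 1)
        * ∑ k, ((∑ i, ∑ j, h i j * T i j k) / Real.sqrt (∑ i, ∑ j, (h i j) ^ 2)) ^ 2
      ≤ (∑ i, ∑ j, ∑ k, (T i j k) ^ 2)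
        + (2 * (n : ℝ)) / ((n : ℝ) + 1) * ∑ k, (∑ i, T i i k) ^ 2 := by
  set m : ℝ := (n : ℝ) with hm_def
  have hm0 : (0:ℝ) ≤ m := Nat.cast_nonneg n
  have hm1 : (0:ℝ) < m + 1 := by linarith
  -- S is positive
  have hS0 : (0:ℝ) ≤ (∑ i, ∑ j, (h i j) ^ 2) :=
    Finset.sum_nonneg fun i _ => Finset.sum_nonneg fun j _ => sq_nonneg _
  have hSpos : (0:ℝ) < (∑ i, ∑ j, (h i j) ^ 2) := lt_of_le_of_ne hS0 (Ne.symm hS)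
  set S : ℝ := ∑ i, ∑ j, (h i j) ^ 2 with hS_def
  -- S equals the diagonal sum
  have hSdiag : S = ∑ i, (h i i) ^ 2 := by
    refine Finset.sum_congr rfl fun i _ => ?_
    rw [Finset.sum_eq_single i (fun j _ hj => by rw [hdiag i j (Ne.symm hj)]; ring)
      (fun hi => absurd (Finset.mem_univ i) hi)]
  -- the numerator of ∇√S
  have hnum : ∀ k, (∑ i, ∑ j, h i j * T i j k) = ∑ i, h i i * T i i k := by
    intro k
    refine Finset.sum_congr rfl fun i _ => ?_
    rw [Finset.sum_eq_single i (fun j _ hj => by rw [hdiag i j (Ne.symm hj)]; ring)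
      (fun hi => absurd (Finset.mem_univ i) hi)]
  set D : ℝ := ∑ k, ∑ i, (T i i k) ^ 2 with hD_def
  set d3 : ℝ := ∑ k, (T k k k) ^ 2 with hd3_def
  set TT : ℝ := ∑ i, ∑ j, ∑ k, (T i j k) ^ 2 with hTT_def
  set SW : ℝ := ∑ k, (∑ i, T i i k) ^ 2 with hSW_def
  -- Step 1: ∑_k (a_k/√S)^2 ≤ D
  have hL : (∑ k, ((∑ i, ∑ j, h i j * T i j k) / Real.sqrt S) ^ 2) ≤ D := by
    refine Finset.sum_le_sum fun k _ => ?_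
    rw [hnum k, div_pow, Real.sq_sqrt hS0, div_le_iff₀ hSpos]
    calc (∑ i, h i i * T i i k) ^ 2
        ≤ (∑ i, (h i i)^2) * ∑ i, (T i i k)^2 :=
          Finset.sum_mul_sq_le_sq_mul_sq _ _ _
      _ = (∑ i, (T i i k) ^ 2) * S := by rw [hSdiag]; ring
  -- Step 2: TT ≥ 3 D - 2 d3
  have hTTsw : TT = ∑ k, ∑ i, ∑ j, (T i j k) ^ 2 := by
    rw [hTT_def]
    rw [show (∑ i, ∑ j, ∑ k, (T i j k)^2) = ∑ i, ∑ k, ∑ j, (T i j k)^2 from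
      Finset.sum_congr rfl fun i _ => Finset.sum_comm]
    exact Finset.sum_comm
  have hF1 : 3 * D - 2 * d3 ≤ TT := by
    rw [hTTsw]
    have perk : ∀ k : Fin n, (∑ i, (T i i k)^2) + 2 * (∑ j, (T k k j)^2)
        - 2 * (T k k k)^2 ≤ ∑ i, ∑ j, (T i j k) ^ 2 := by
      intro k
      have hsplitk : (∑ i, ∑ j, (T i j k) ^ 2)
          = (∑ j, (T k j k)^2) + ∑ i ∈ Finset.univ.erase k, ∑ j, (T i j k)^2 :=
        (Finset.add_sum_erase _ _ (Finset.mem_univ k)).symm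
      have h1 : (∑ j, (T k j k)^2) = ∑ j, (T k k j)^2 :=
        Finset.sum_congr rfl fun j _ => by rw [(hTsymm k j k).2]
      have h2 : ∀ i ∈ Finset.univ.erase k,
          (T i i k)^2 + (T k k i)^2 ≤ ∑ j, (T i j k)^2 := by
        intro i hi
        have hik : i ≠ k := Finset.ne_of_mem_erase hi
        have hpair : (∑ j ∈ ({i, k} : Finset (Fin n)), (T i j k)^2)
            = (T i i k)^2 + (T i k k)^2 := Finset.sum_pair hik
        have hTikk : T i k k = T k k i := by
          rw [(hTsymm i k k).1, (hTsymm k i k).2]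
        calc (T i i k)^2 + (T k k i)^2 = ∑ j ∈ ({i, k} : Finset (Fin n)), (T i j k)^2 := by
              rw [hpair, hTikk]
          _ ≤ ∑ j, (T i j k)^2 :=
              Finset.sum_le_sum_of_subset_of_nonneg (Finset.subset_univ _)
                (fun j _ _ => sq_nonneg _)
      have h2' : (∑ i ∈ Finset.univ.erase k, ((T i i k)^2 + (T k k i)^2))
          ≤ ∑ i ∈ Finset.univ.erase k, ∑ j, (T i j k)^2 := Finset.sum_le_sum h2
      have e1 : (∑ i ∈ Finset.univ.erase k, (T i i k)^2)
          = (∑ i, (T i i k)^2) - (T k k k)^2 := by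
        rw [eq_sub_iff_add_eq]; exact Finset.sum_erase_add _ _ (Finset.mem_univ k)
      have e2 : (∑ i ∈ Finset.univ.erase k, (T k k i)^2)
          = (∑ i, (T k k i)^2) - (T k k k)^2 := by
        rw [eq_sub_iff_add_eq]; exact Finset.sum_erase_add _ _ (Finset.mem_univ k)
      rw [hsplitk, h1]
      rw [Finset.sum_add_distrib, e1, e2] at h2'
      linarith
    have hsum := Finset.sum_le_sum fun k (_ : k ∈ Finset.univ) => perk k
    rw [Finset.sum_sub_distrib, Finset.sum_add_distrib, ← Finset.mul_sum, ← Finset.mul_sum]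
      at hsum
    have hswap : (∑ k, ∑ j, (T k k j)^2) = D := by
      rw [hD_def]; exact Finset.sum_comm
    rw [hswap] at hsum
    have : (∑ k : Fin n, ∑ i, (T i i k)^2) = D := rfl
    rw [this] at hsum
    linarith [hsum]
  -- Step 3: d3 ≤ m * (D - d3) + m * SW
  have hF2 : d3 ≤ m * (D - d3) + m * SW := by
    have perk : ∀ k : Fin n, (T k k k)^2
        ≤ m * (∑ i ∈ Finset.univ.erase k, (T i i k)^2) + m * (∑ i, T i i k)^2 :=
      fun k => ssy_aux_key k (fun i => T i i k)
    have hsum := Finset.sum_le_sum fun k (_ : k ∈ Finset.univ) => perk k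
    rw [Finset.sum_add_distrib, ← Finset.mul_sum, ← Finset.mul_sum] at hsum
    have e : (∑ k : Fin n, ∑ i ∈ Finset.univ.erase k, (T i i k)^2) = D - d3 := by
      rw [hD_def, hd3_def, ← Finset.sum_sub_distrib]
      refine Finset.sum_congr rfl fun k _ => ?_
      rw [eq_sub_iff_add_eq]; exact Finset.sum_erase_add _ _ (Finset.mem_univ k)
    rw [e] at hsum
    exact hsum
  -- Final assembly
  have hC : (0:ℝ) ≤ (m + 3) / (m + 1) := by positivity
  calc (m + 3) / (m + 1) * ∑ k, ((∑ i, ∑ j, h i j * T i j k) / Real.sqrt S) ^ 2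
      ≤ (m + 3) / (m + 1) * D := mul_le_mul_of_nonneg_left hL hC
    _ ≤ TT + 2 * m / (m + 1) * SW := by
        rw [div_mul_eq_mul_div, div_le_iff₀ hm1]
        have hcancel : (2 * m / (m + 1) * SW) * (m + 1) = 2 * m * SW := by
          field_simp
        have hmul : m * (3 * D - 2 * d3) ≤ m * TT := mul_le_mul_of_nonneg_left hF1 hm0
        have expand : (TT + 2 * m / (m + 1) * SW) * (m + 1)
            = TT * (m + 1) + 2 * m * SW := by
          rw [add_mul, hcancel]
        rw [expand]
        nlinarith [hmul, hF1, hF2]
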